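/- arXiv:1909.03651 — 3 statements merged into one kernel-verified Lean document; each statement's English description precedes it below -/
import Mathlib

section
/- The function f(z) = [(1 - αz - βz³)² + 1] · e^{-z}/(1+e^{-z})² / C(α,β), where C(α,β) = (210 + 35π²α² + 98π⁴αβ + 155π⁶β²)/105, integrates to 1 over the real line for all real α and β. -/
open Real MeasureTheory Filter

noncomputable def C (α β : ℝ) : ℝ :=
  (210 + 35 * π ^ 2 * α ^ 2 + 98 * π ^ 4 * α * β + 155 * π ^ 6 * β ^ 2) / 105

noncomputable def g (z : ℝ) : ℝ := Real.exp (-z) / (1 + Real.exp (-z)) ^ 2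

noncomputable def f (z α β : ℝ) : ℝ := ((1 - α * z - β * z ^ 3) ^ 2 + 1) / C α β * g z

/-!
Expanding the square, `f` is a combination of the moments `∫ z ^ k * g z` of the standard logistic
density `g`, for `k ≤ 6`. The odd moments vanish because `g` is even, and `∫ g = 1` because `g` is
the derivative of `(1 + e^{-z})⁻¹`. For even `k ≥ 2`, the expansion
`g t = ∑ (-1)^(n+1) n e^{-nt}` on `t > 0` integrates termwise to
`∫_{t>0} t^k g t = k! (1 - 2^{1-k}) ζ(k)`, which gives the moments `π²/3`, `7π⁴/15` and `31π⁶/21`;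
`C α β` is exactly the resulting combination.
-/

open Set Topology
open scoped Nat

lemma g_neg (z : ℝ) : g (-z) = g z := by
  unfold g
  rw [neg_neg, exp_neg]
  field_simp
  ring

lemma g_abs (z : ℝ) : g |z| = g z := by
  rcases abs_cases z with ⟨h, -⟩ | ⟨h, -⟩ <;> simp only [h, g_neg]

lemma g_nonneg (z : ℝ) : 0 ≤ g z := by
  unfold g; positivity

@[fun_prop]
lemma continuous_g : Continuous g :=
  (continuous_exp.comp continuous_neg).div (by fun_prop) fun _ ↦ by positivity

lemma g_le_exp_neg (z : ℝ) : g z ≤ exp (-z) :=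
  div_le_self (exp_pos _).le (one_le_pow₀ (le_add_of_nonneg_right (exp_pos _).le))

lemma integral_pow_mul_exp_neg_mul_Ioi (k : ℕ) {c : ℝ} (hc : 0 < c) :
    ∫ t in Ioi (0 : ℝ), t ^ k * exp (-(c * t)) = k ! / c ^ (k + 1) := by
  have h := integral_rpow_mul_exp_neg_mul_Ioi (a := k + 1) (by positivity) hc
  simp only [add_sub_cancel_right, rpow_natCast] at h
  rw [h, Gamma_nat_eq_factorial, ← Nat.cast_add_one, rpow_natCast]
  ring

lemma integrableOn_pow_mul_exp_neg_mul_Ioi (k : ℕ) {c : ℝ} (hc : 0 < c) :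
    IntegrableOn (fun t : ℝ ↦ t ^ k * exp (-(c * t))) (Ioi 0) :=
  Integrable.of_integral_ne_zero (by rw [integral_pow_mul_exp_neg_mul_Ioi k hc]; positivity)

lemma integrableOn_pow_mul_g_Ioi (k : ℕ) : IntegrableOn (fun t : ℝ ↦ t ^ k * g t) (Ioi 0) := by
  refine (integrableOn_pow_mul_exp_neg_mul_Ioi k one_pos).mono' (by fun_prop)
    ((ae_restrict_iff' measurableSet_Ioi).2 (ae_of_all _ fun t (ht : 0 < t) ↦ ?_))
  rw [norm_mul, norm_pow, norm_of_nonneg ht.le, norm_of_nonneg (g_nonneg t), one_mul]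
  exact mul_le_mul_of_nonneg_left (g_le_exp_neg t) (by positivity)

lemma integrable_comp_abs {E : Type*} [NormedAddCommGroup E] {F : ℝ → E}
    (h : IntegrableOn F (Ioi 0)) : Integrable fun x ↦ F |x| := by
  have hIoi : IntegrableOn (fun x ↦ F |x|) (Ioi 0) :=
    h.congr_fun (fun x hx ↦ by rw [abs_of_pos hx]) measurableSet_Ioi
  have hIic : IntegrableOn (fun x ↦ F |x|) (Iic 0) := by
    rw [← Measure.map_neg_eq_self (volume : Measure ℝ),
      measurableEmbedding_neg.integrableOn_map_iff]
    simp_rw [Function.comp_def, abs_neg, neg_preimage, neg_Iic, neg_zero]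
    exact (integrableOn_Ici_iff_integrableOn_Ioi).mpr hIoi
  rw [← integrableOn_univ, ← Iic_union_Ioi (a := 0)]
  exact hIic.union hIoi

lemma integrable_pow_mul_g (k : ℕ) : Integrable fun z : ℝ ↦ z ^ k * g z :=
  (integrable_comp_abs (integrableOn_pow_mul_g_Ioi k)).mono' (by fun_prop)
    (ae_of_all _ fun z ↦ by
      rw [norm_mul, norm_pow, norm_eq_abs, norm_of_nonneg (g_nonneg z), g_abs])

lemma hasSum_g {t : ℝ} (ht : 0 < t) :
    HasSum (fun n : ℕ ↦ (-1) ^ (n + 1) * (n * exp (-(n * t)))) (g t) := by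
  have hr : ‖-exp (-t)‖ < 1 := by
    rw [norm_neg, norm_of_nonneg (exp_pos _).le]
    exact exp_lt_one_iff.2 (by linarith)
  have hterm : (fun n : ℕ ↦ (-1) ^ (n + 1) * (n * exp (-(n * t))))
      = fun n : ℕ ↦ -(n * (-exp (-t)) ^ n) := by
    funext n
    rw [neg_pow (exp (-t)), ← exp_nat_mul, mul_neg, pow_succ]
    ring
  rw [hterm, show g t = -(-exp (-t) / (1 - -exp (-t)) ^ 2) by unfold g; ring]
  exact (hasSum_coe_mul_geometric_of_norm_lt_one hr).neg

lemma integral_natCast_mul_pow_mul_exp_neg_mul_Ioi {k : ℕ} (hk : k ≠ 0) (n : ℕ) :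
    ∫ t in Ioi (0 : ℝ), n * (t ^ k * exp (-(n * t))) = k ! / (n : ℝ) ^ k := by
  rcases n.eq_zero_or_pos with rfl | hn
  · simp [hk]
  · rw [integral_const_mul, integral_pow_mul_exp_neg_mul_Ioi k (by positivity), pow_succ]
    field_simp

lemma hasSum_integral_pow_mul_g_Ioi {k : ℕ} (hk : 2 ≤ k) :
    HasSum (fun n : ℕ ↦ (-1) ^ (n + 1) * (k ! / (n : ℝ) ^ k))
      (∫ t in Ioi (0 : ℝ), t ^ k * g t) := by
  set F : ℕ → ℝ → ℝ := fun n t ↦ (-1) ^ (n + 1) * (n * (t ^ k * exp (-(n * t))))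
  have hF_int (n : ℕ) : IntegrableOn (F n) (Ioi 0) := by
    rcases n.eq_zero_or_pos with rfl | hn
    · simp [F]
    · have h := integrableOn_pow_mul_exp_neg_mul_Ioi k (Nat.cast_pos.2 hn)
      exact (h.const_mul _).const_mul _
  have hF_norm (n : ℕ) : ∫ t in Ioi (0 : ℝ), ‖F n t‖ = k ! / (n : ℝ) ^ k := by
    rw [← integral_natCast_mul_pow_mul_exp_neg_mul_Ioi (by omega) n]
    refine setIntegral_congr_fun measurableSet_Ioi fun t (ht : 0 < t) ↦ ?_
    rw [norm_mul, norm_pow, norm_neg, norm_one, one_pow, one_mul, norm_of_nonneg (by positivity)]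
  have hF_sum : ∀ t ∈ Ioi (0 : ℝ), HasSum (F · t) (t ^ k * g t) := fun t ht ↦
    ((hasSum_g ht).mul_left (t ^ k)).congr_fun fun n ↦ by ring
  have hsum : Summable fun n : ℕ ↦ (k ! : ℝ) / (n : ℝ) ^ k := by
    simpa only [mul_one_div] using (summable_one_div_nat_pow.2 hk).mul_left (k ! : ℝ)
  have hF_integral (n : ℕ) :
      ∫ t in Ioi (0 : ℝ), F n t = (-1) ^ (n + 1) * (k ! / (n : ℝ) ^ k) := by
    rw [integral_const_mul, integral_natCast_mul_pow_mul_exp_neg_mul_Ioi (by omega)]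
  have H := hasSum_integral_of_summable_integral_norm hF_int (by simpa only [hF_norm] using hsum)
  simp only [hF_integral] at H
  rwa [setIntegral_congr_fun measurableSet_Ioi fun t ht ↦ (hF_sum t ht).tsum_eq] at H

lemma hasSum_neg_one_pow_succ_div_pow {k : ℕ} {S : ℝ}
    (h : HasSum (fun n : ℕ ↦ 1 / (n : ℝ) ^ k) S) :
    HasSum (fun n : ℕ ↦ (-1) ^ (n + 1) / (n : ℝ) ^ k) ((1 - 2 / 2 ^ k) * S) := by
  have heven : HasSum (fun m : ℕ ↦ 1 / ((2 * m : ℕ) : ℝ) ^ k) (S / 2 ^ k) :=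
    (h.div_const (2 ^ k)).congr_fun fun m ↦ by push_cast; rw [mul_pow, div_div, mul_comm]
  have hodd : HasSum (fun m : ℕ ↦ 1 / ((2 * m + 1 : ℕ) : ℝ) ^ k) (S - S / 2 ^ k) := by
    have hinj : Function.Injective fun m : ℕ ↦ 2 * m + 1 := fun a b hab ↦ by
      simp only at hab; omega
    obtain ⟨T, hT⟩ : Summable fun m : ℕ ↦ 1 / ((2 * m + 1 : ℕ) : ℝ) ^ k :=
      h.summable.comp_injective hinj
    have hS := (HasSum.even_add_odd (f := fun n : ℕ ↦ 1 / (n : ℝ) ^ k) heven hT).unique h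
    rwa [show S - S / 2 ^ k = T by linarith]
  convert HasSum.even_add_odd (f := fun n : ℕ ↦ (-1) ^ (n + 1) / (n : ℝ) ^ k)
    (heven.neg.congr_fun fun m ↦ by simp [pow_succ, pow_mul, neg_div])
    (hodd.congr_fun fun m ↦ by simp [pow_succ, pow_mul]) using 1
  ring

lemma hasSum_zeta_six : HasSum (fun n : ℕ ↦ 1 / (n : ℝ) ^ 6) (π ^ 6 / 945) := by
  have h := hasSum_zeta_nat (k := 3) (by norm_num)
  have hB : bernoulli 6 = 1 / 42 := by
    rw [bernoulli_eq_bernoulli'_of_ne_one (by norm_num), bernoulli'_def]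
    norm_num [Finset.sum_range_succ, bernoulli'_eq_zero_of_odd (by decide : Odd 5), Nat.choose]
  norm_num [hB, Nat.factorial] at h
  convert h using 1
  · simp only [one_div]
  · ring

lemma integral_pow_mul_g_Ioi {k : ℕ} (hk : 2 ≤ k) {S : ℝ}
    (h : HasSum (fun n : ℕ ↦ 1 / (n : ℝ) ^ k) S) :
    ∫ t in Ioi (0 : ℝ), t ^ k * g t = k ! * ((1 - 2 / 2 ^ k) * S) :=
  (hasSum_integral_pow_mul_g_Ioi hk).unique <|
    ((hasSum_neg_one_pow_succ_div_pow h).mul_left (k ! : ℝ)).congr_fun fun n ↦ by ring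

lemma integral_pow_mul_g_of_even {k : ℕ} (hk : Even k) :
    ∫ z : ℝ, z ^ k * g z = 2 * ∫ t in Ioi (0 : ℝ), t ^ k * g t := by
  rw [← integral_comp_abs]
  simp only [g_abs, hk.pow_abs]

lemma integral_pow_mul_g_of_odd {k : ℕ} (hk : Odd k) : ∫ z : ℝ, z ^ k * g z = 0 := by
  have h := integral_neg_eq_self (fun z : ℝ ↦ z ^ k * g z) volume
  simp only [hk.neg_pow, g_neg, neg_mul, integral_neg] at h
  linarith

lemma integral_g : ∫ z : ℝ, g z = 1 := by
  have hderiv (x : ℝ) : HasDerivAt (fun x ↦ (1 + exp (-x))⁻¹) (g x) x := by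
    rw [show g x = -(exp (-x) * -1) / (1 + exp (-x)) ^ 2 by unfold g; ring]
    exact (((hasDerivAt_neg x).exp).const_add 1).inv (by positivity)
  have hbot : Tendsto (fun x ↦ (1 + exp (-x))⁻¹) atBot (𝓝 0) :=
    (tendsto_atTop_add_const_left _ _
      (tendsto_exp_atTop.comp tendsto_neg_atBot_atTop)).inv_tendsto_atTop
  have htop : Tendsto (fun x ↦ (1 + exp (-x))⁻¹) atTop (𝓝 1) := by
    simpa using ((tendsto_exp_atBot.comp tendsto_neg_atTop_atBot).const_add 1).inv₀ (by norm_num)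
  simpa using integral_of_hasDerivAt_of_tendsto hderiv
    (by simpa using integrable_pow_mul_g 0) hbot htop

lemma integral_sq_mul_g : ∫ z : ℝ, z ^ 2 * g z = π ^ 2 / 3 := by
  rw [integral_pow_mul_g_of_even even_two, integral_pow_mul_g_Ioi le_rfl hasSum_zeta_two]
  norm_num [Nat.factorial]
  ring

lemma integral_pow_four_mul_g : ∫ z : ℝ, z ^ 4 * g z = 7 * π ^ 4 / 15 := by
  rw [integral_pow_mul_g_of_even (by decide),
    integral_pow_mul_g_Ioi (by norm_num) hasSum_zeta_four]
  norm_num [Nat.factorial]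
  ring

lemma integral_pow_six_mul_g : ∫ z : ℝ, z ^ 6 * g z = 31 * π ^ 6 / 21 := by
  rw [integral_pow_mul_g_of_even (by decide),
    integral_pow_mul_g_Ioi (by norm_num) hasSum_zeta_six]
  norm_num [Nat.factorial]
  ring

lemma C_pos (α β : ℝ) : 0 < C α β := by
  have hC : C α β =
      (1050 + 7 * π ^ 2 * (5 * α + 7 * π ^ 2 * β) ^ 2 + 432 * π ^ 6 * β ^ 2) / 525 := by
    unfold C
    ring
  rw [hC]
  positivity

theorem stmt0 (α β : ℝ) : ∫ z : ℝ, f z α β = 1 := by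
  let c : Fin 7 → ℝ := ![2, -2 * α, α ^ 2, -2 * β, 2 * α * β, 0, β ^ 2]
  have hf : (fun z ↦ f z α β) = fun z ↦ (C α β)⁻¹ * ∑ k : Fin 7, c k * (z ^ (k : ℕ) * g z) := by
    funext z
    simp only [f, c, Fin.sum_univ_seven, Matrix.cons_val, Fin.coe_ofNat_eq_mod, Nat.reduceMod]
    ring
  have h1 : ∫ z : ℝ, z * g z = 0 := by simpa using integral_pow_mul_g_of_odd odd_one
  rw [hf, integral_const_mul,
    integral_finsetSum _ fun (k : Fin 7) _ ↦ (integrable_pow_mul_g k).const_mul (c k)]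
  simp only [c, Fin.sum_univ_seven, Matrix.cons_val, Fin.coe_ofNat_eq_mod, Nat.reduceMod,
    integral_const_mul, pow_zero, one_mul, pow_one, integral_g, h1,
    integral_pow_mul_g_of_odd (k := 3) (by decide), integral_sq_mul_g, integral_pow_four_mul_g,
    integral_pow_six_mul_g]
  rw [inv_mul_eq_one₀ (C_pos α β).ne', C]
  ring
end

section
/- For each fixed real z and fixed β, as α → +∞ the AbSLG density f(z;α,β) converges pointwise to (3z²/π²) · e^{-z}/(1+e^{-z})², the bimodal logistic BLG(2) density. -/
open Real MeasureTheory Filter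

theorem stmt4 (z β : ℝ) :
    Tendsto (fun α : ℝ => f z α β) atTop (nhds (3 * z ^ 2 / π ^ 2 * g z)) := by
  have hπ : (π : ℝ) ≠ 0 := Real.pi_ne_zero
  set A : ℝ := 1 - β * z ^ 3 with hA
  set N : ℝ → ℝ := fun t => z ^ 2 - 2 * A * z * t + (A ^ 2 + 1) * t ^ 2 with hN
  set D : ℝ → ℝ := fun t =>
    π ^ 2 / 3 + (98 * π ^ 4 * β / 105) * t + ((210 + 155 * π ^ 6 * β ^ 2) / 105) * t ^ 2 with hD
  have hD0 : D 0 = π ^ 2 / 3 := by simp [hD]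
  have hD0ne : D 0 ≠ 0 := by rw [hD0]; positivity
  have hCN : Continuous N := by fun_prop
  have hCD : Continuous D := by fun_prop
  have h1 : Tendsto (fun t => N t / D t) (nhds 0) (nhds (N 0 / D 0)) :=
    Tendsto.div (hCN.tendsto 0) (hCD.tendsto 0) hD0ne
  have hval : N 0 / D 0 = 3 * z ^ 2 / π ^ 2 := by
    rw [hD0]
    have : N 0 = z ^ 2 := by simp [hN]
    rw [this]
    field_simp
  rw [hval] at h1
  have hinv : Tendsto (fun α : ℝ => α⁻¹) atTop (nhds (0 : ℝ)) := tendsto_inv_atTop_zero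
  have hmain : Tendsto (fun α : ℝ => N α⁻¹ / D α⁻¹ * g z) atTop
      (nhds (3 * z ^ 2 / π ^ 2 * g z)) := (h1.comp hinv).mul_const (g z)
  apply hmain.congr'
  filter_upwards [eventually_gt_atTop 0] with α hα
  have hαne : α ≠ 0 := ne_of_gt hα
  have hw : ((α⁻¹) ^ 2 : ℝ) ≠ 0 := by positivity
  have e1 : N α⁻¹ = ((1 - α * z - β * z ^ 3) ^ 2 + 1) * (α⁻¹) ^ 2 := by
    simp only [hN, hA]
    field_simp
    ring
  have e2 : D α⁻¹ = C α β * (α⁻¹) ^ 2 := by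
    simp only [hD, C]
    field_simp
    ring
  rw [e1, e2, mul_div_mul_right _ _ hw]
  rfl
end

section
/- For each fixed real z and fixed α, as β → +∞ the AbSLG density f(z;α,β) converges pointwise to (21z⁶/(31π⁶)) · e^{-z}/(1+e^{-z})², the bimodal logistic BLG(6) density. -/
open Real MeasureTheory Filter

theorem stmt5 (z α : ℝ) :
    Tendsto (fun β : ℝ => f z α β) atTop (nhds (21 * z ^ 6 / (31 * π ^ 6) * g z)) := by
  have hπ : π ≠ 0 := Real.pi_ne_zero
  set F : ℝ → ℝ := fun t =>
    (((1 - α * z) * t - z ^ 3) ^ 2 + t ^ 2) * 105 /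
      (210 * t ^ 2 + 35 * π ^ 2 * α ^ 2 * t ^ 2 + 98 * π ^ 4 * α * t + 155 * π ^ 6) with hF
  have hden0 : (210 * (0:ℝ) ^ 2 + 35 * π ^ 2 * α ^ 2 * 0 ^ 2 + 98 * π ^ 4 * α * 0 + 155 * π ^ 6)
      ≠ 0 := by
    simp only [ne_eq, mul_zero, zero_pow, add_zero, zero_add]
    positivity
  have hcont : ContinuousAt F 0 := by
    apply ContinuousAt.div
    · fun_prop
    · fun_prop
    · exact hden0
  have hF0 : F 0 = 21 * z ^ 6 / (31 * π ^ 6) := by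
    simp only [hF]
    rw [div_eq_div_iff hden0 (by positivity)]
    ring
  have hlim : Tendsto (fun β : ℝ => F (1 / β)) atTop (nhds (21 * z ^ 6 / (31 * π ^ 6))) := by
    rw [← hF0]
    have : Tendsto (fun β : ℝ => (1:ℝ) / β) atTop (nhds 0) := by
      simpa only [one_div] using (tendsto_inv_atTop_zero : Tendsto (fun β:ℝ => β⁻¹) atTop (nhds 0))
    exact hcont.tendsto.comp this
  have heq : ∀ᶠ β in (atTop : Filter ℝ), F (1 / β) * g z = f z α β := by
    filter_upwards [eventually_gt_atTop 0] with β hβ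
    have hβ0 : β ≠ 0 := ne_of_gt hβ
    have hC : C α β ≠ 0 := by
      unfold C
      have : (0:ℝ) < 210 + 35 * π ^ 2 * α ^ 2 + 98 * π ^ 4 * α * β + 155 * π ^ 6 * β ^ 2 := by
        nlinarith [sq_nonneg (5 * π * α + 7 * π ^ 3 * β), sq_nonneg (π ^ 3 * β),
          sq_nonneg (π * α)]
      positivity
    have hden : (210 * (1/β) ^ 2 + 35 * π ^ 2 * α ^ 2 * (1/β) ^ 2 + 98 * π ^ 4 * α * (1/β)
        + 155 * π ^ 6) ≠ 0 := by
      have : (210 * (1/β) ^ 2 + 35 * π ^ 2 * α ^ 2 * (1/β) ^ 2 + 98 * π ^ 4 * α * (1/β)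
          + 155 * π ^ 6) = C α β * 105 / β ^ 2 := by
        unfold C; field_simp
      rw [this]
      positivity
    unfold f
    rw [hF]
    congr 1
    rw [div_eq_div_iff hden hC]
    unfold C
    field_simp
  exact (hlim.mul_const (g z)).congr' heq
end
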